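/- arXiv:1609.07356 — 2 statements merged into one kernel-verified Lean document; each statement's English description precedes it below -/
import Mathlib

section
/- The maps d satisfy d ∘ d = 0; that is, for every d ≥ 2, the composite F_d → F_{d-1} → F_{d-2} of the two differentials is the zero map, so F is a chain complex of free S-modules. -/
open Classical MvPolynomial Finsupp TensorProduct

set_option maxHeartbeats 1600000

noncomputable section

namespace EdgeRes

/-- A "cell" `(σ, τ)`: a pair of finite sets of vertices, representing the symbol `[σ|τ]`. -/
abbrev Cell (n : ℕ) := Finset (Fin n) × Finset (Fin n)

/-- The cointerval graph of the intervals `[a i, b i]`: distinct vertices are adjacent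
iff the corresponding closed intervals are disjoint. -/
def cigraph (n : ℕ) (a b : Fin n → ℝ) : SimpleGraph (Fin n) where
  Adj i j := i ≠ j ∧ Disjoint (Set.Icc (a i) (b i)) (Set.Icc (a j) (b j))
  symm := by constructor; intro i j h; exact ⟨h.1.symm, h.2.symm⟩
  loopless := by constructor; intro i h; exact h.1 rfl

variable {n : ℕ}

/-- The homological degree of a cell: `|σ| + |τ| - 1`. -/
def cellDeg (e : Cell n) : ℕ := e.1.card + e.2.card - 1

/-- `e = (σ, τ)` is a basis cell: either the degree-0 cell `(∅, ∅)` (representing `1 ∈ B₀`),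
or `σ, τ` are disjoint and nonempty, `max σ < min τ`, and every `i ∈ σ` is adjacent
to `min τ` in `G`. -/
def IsBasisCell (G : SimpleGraph (Fin n)) (e : Cell n) : Prop :=
  e = (∅, ∅) ∨
  (e.1.Nonempty ∧ e.2.Nonempty ∧ Disjoint e.1 e.2 ∧
   (∀ i ∈ e.1, ∀ j ∈ e.2, i < j) ∧
   (∀ i ∈ e.1, ∀ j ∈ e.2, (∀ j' ∈ e.2, j ≤ j') → G.Adj i j))

/-- `e ∈ B_d`. -/
def InB (G : SimpleGraph (Fin n)) (d : ℕ) (e : Cell n) : Prop :=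
  IsBasisCell G e ∧ cellDeg e = d

/-- The underlying module of the resolution: the free `S`-module on all cells (the
resolution `F` is the submodule family spanned by the basis cells of each degree). -/
abbrev Ftot (n : ℕ) (k : Type) [Field k] := Cell n →₀ MvPolynomial (Fin n) k

variable (G : SimpleGraph (Fin n)) (k : Type) [Field k]

/-- The basis vector corresponding to a cell, where symbols that are not genuine
basis elements are interpreted as `0`. -/
def sym (e : Cell n) : Ftot n k :=
  if IsBasisCell G e then Finsupp.single e 1 else 0

/-- The differential on a basis cell: `d[{i}|{j}] = x_i x_j`, and for `|σ|+|τ| ≥ 3`,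
`d[σ|τ] = Σ_{i∈σ} (−1)^{|τ|+|{j∈σ : j>i}|} x_i [σ∖i|τ] + Σ_{i∈τ} (−1)^{|{j∈τ : j>i}|} x_i [σ|τ∖i]`. -/
def diffCell (e : Cell n) : Ftot n k :=
  if IsBasisCell G e then
    if e.1.card + e.2.card = 2 then
      (∏ i ∈ e.1 ∪ e.2, (X i : MvPolynomial (Fin n) k)) • sym G k ((∅, ∅) : Cell n)
    else if 3 ≤ e.1.card + e.2.card then
      (∑ i ∈ e.1,
        (((-1 : MvPolynomial (Fin n) k) ^ (e.2.card + (e.1.filter fun j => i < j).card)) * X i) •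
          sym G k (e.1.erase i, e.2))
      + (∑ i ∈ e.2,
        (((-1 : MvPolynomial (Fin n) k) ^ ((e.2.filter fun j => i < j).card)) * X i) •
          sym G k (e.1, e.2.erase i))
    else 0
  else 0

/-- The differential, as an `S`-linear endomorphism of the total module (it is zero in
degree `0` and on non-basis cells). -/
def Dmap : Ftot n k →ₗ[MvPolynomial (Fin n) k] Ftot n k :=
  Finsupp.lsum ℕ fun e => LinearMap.smulRight LinearMap.id (diffCell G k e)

/-- The submodule `F_d`: the span of the basis cells in `B_d`.  (`F` is the direct sum of
these, and `F_0 = S·[∅|∅] ≅ S`.) -/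
def Fsub (d : ℕ) : Submodule (MvPolynomial (Fin n) k) (Ftot n k) :=
  Submodule.span _ {f : Ftot n k | ∃ e : Cell n, InB G d e ∧ f = Finsupp.single e 1}

/-- The edge ideal `I_G`, generated by the `x_i x_j` for edges `ij` of `G`. -/
def edgeIdeal : Ideal (MvPolynomial (Fin n) k) :=
  Ideal.span {m | ∃ i j : Fin n, G.Adj i j ∧ m = X i * X j}

/-- The irrelevant maximal ideal `(x_1, …, x_n)`. -/
def irrIdeal (n : ℕ) (k : Type) [Field k] : Ideal (MvPolynomial (Fin n) k) :=
  Ideal.span (Set.range fun i : Fin n => (X i : MvPolynomial (Fin n) k))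

/-- The set of pairs `(i, j)` with `i < j`, `ij ∈ E(G)`, and `x_i x_j ∣ x^α`; i.e. the
elements `[{i}|{j}]` of `B₁` whose monomial divides `x^α`. -/
def DvdSet (α : Fin n →₀ ℕ) : Finset (Fin n × Fin n) :=
  Finset.univ.filter fun p => p.1 < p.2 ∧ G.Adj p.1 p.2 ∧ 1 ≤ α p.1 ∧ 1 ≤ α p.2

/-- `c` on a monomial `x^α ∈ F_0 = S`: zero if `x^α ∉ I_G`; otherwise
`(x^α/(x_i x_j))·[{i}|{j}]` for the `≺`-minimal `[{i}|{j}] ∈ B₁` with `x_i x_j ∣ x^α`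
(i.e. `j` is largest possible and then `i` smallest possible). -/
def cZero (α : Fin n →₀ ℕ) : Ftot n k :=
  if h : (DvdSet G α).Nonempty then
    let t := ((DvdSet G α).image Prod.snd).max' (h.image _)
    if h2 : ((((DvdSet G α).filter fun p => p.2 = t)).image Prod.fst).Nonempty then
      let s := ((((DvdSet G α).filter fun p => p.2 = t)).image Prod.fst).min' h2
      (monomial (α - Finsupp.single s 1 - Finsupp.single t 1) (1 : k)) • sym G k ({s}, {t})
    else 0
  else 0

/-- `C₁ = {i ∈ supp α : i > max τ}`. -/
def C1set (τ : Finset (Fin n)) (α : Fin n →₀ ℕ) : Finset (Fin n) :=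
  α.support.filter fun i => ∀ j ∈ τ, j < i

/-- `C₂ = {i ∈ supp α : i < min σ, {i, min τ} ∈ E(G)}`. -/
def C2set (σ τ : Finset (Fin n)) (α : Fin n →₀ ℕ) : Finset (Fin n) :=
  α.support.filter fun i =>
    (∀ s ∈ σ, i < s) ∧ ∀ j ∈ τ, (∀ j' ∈ τ, j ≤ j') → G.Adj i j

/-- `C₃ = {i ∈ supp α : i < min σ, i < max supp α, {i, max supp α} ∈ E(G)}`. -/
def C3set (σ : Finset (Fin n)) (α : Fin n →₀ ℕ) : Finset (Fin n) :=
  α.support.filter fun i =>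
    (∀ s ∈ σ, i < s) ∧ ∀ m ∈ α.support, (∀ m' ∈ α.support, m' ≤ m) → (i < m ∧ G.Adj i m)

/-- The value of the contracting homotopy `c` on the `k`-basis vector `x^α·e`. -/
def cMono (e : Cell n) (α : Fin n →₀ ℕ) : Ftot n k :=
  if IsBasisCell G e then
    if hτ : e.2.Nonempty then
      if e.2.card = 1 then
        -- `τ = {t}`
        let t := e.2.max' hτ
        if h1 : (C1set e.2 α).Nonempty then
          let m1 := (C1set e.2 α).max' h1
          (monomial (α - Finsupp.single m1 1) (1 : k)) • sym G k (e.1, insert m1 e.2)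
          + (if h3 : (C3set G e.1 α).Nonempty then
              let m3 := (C3set G e.1 α).min' h3
              ((-1 : MvPolynomial (Fin n) k) ^ (e.1.card + 1)) •
                ((monomial (α + Finsupp.single t 1 - Finsupp.single m1 1 - Finsupp.single m3 1)
                    (1 : k)) • sym G k (insert m3 e.1, ({m1} : Finset (Fin n))))
            else 0)
        else
          if h2 : (C2set G e.1 e.2 α).Nonempty then
            let m2 := (C2set G e.1 e.2 α).min' h2
            ((-1 : MvPolynomial (Fin n) k) ^ (e.1.card + 1)) •
              ((monomial (α - Finsupp.single m2 1) (1 : k)) • sym G k (insert m2 e.1, e.2))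
          else 0
      else
        -- `|τ| ≥ 2`
        if h1 : (C1set e.2 α).Nonempty then
          let m1 := (C1set e.2 α).max' h1
          (monomial (α - Finsupp.single m1 1) (1 : k)) • sym G k (e.1, insert m1 e.2)
        else 0
    else cZero G k α  -- the degree-0 basis cell `(∅, ∅)`
  else 0

/-- The `k`-basis of the total module, indexed by pairs (cell, monomial exponent). -/
def FBasis (n : ℕ) (k : Type) [Field k] :
    Module.Basis ((_ : Cell n) × (Fin n →₀ ℕ)) k (Ftot n k) :=
  Finsupp.basis fun _ => MvPolynomial.basisMonomials (Fin n) k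

/-- The contracting homotopy `c`, as a `k`-linear endomorphism of the total module. -/
def Cmap : Ftot n k →ₗ[k] Ftot n k :=
  (FBasis n k).constr ℕ fun p => cMono G k p.1 p.2

/-- The `S`-bilinear extension of a map defined on pairs of cells. -/
def biext (b : Cell n → Cell n → Ftot n k) (f g : Ftot n k) : Ftot n k :=
  ∑ e₁ ∈ f.support, ∑ e₂ ∈ g.support, (f e₁ * g e₂) • b e₁ e₂

/-- The product of two basis cells, defined recursively (with fuel, which suffices as each
recursive step lowers the total degree): `1 ⋆ 1 = 1`, and for `p + q ≥ 1`,
`e₁ ⋆ e₂ = c((d e₁) ⋆ e₂) + (−1)^p c(e₁ ⋆ (d e₂))`. -/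
def bstar : ℕ → Cell n → Cell n → Ftot n k
  | 0, _, _ => 0
  | N + 1, e₁, e₂ =>
    if cellDeg e₁ + cellDeg e₂ = 0 then Finsupp.single ((∅, ∅) : Cell n) 1
    else
      Cmap G k (biext k (fun a b => bstar N a b) (Dmap G k (Finsupp.single e₁ 1)) (Finsupp.single e₂ 1))
      + ((-1 : MvPolynomial (Fin n) k) ^ cellDeg e₁) •
          Cmap G k (biext k (fun a b => bstar N a b) (Finsupp.single e₁ 1) (Dmap G k (Finsupp.single e₂ 1)))

/-- The product `⋆` on the resolution, extended `S`-bilinearly from basis cells. -/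
def pstar (f g : Ftot n k) : Ftot n k := biext k (bstar G k (4 * n + 4)) f g

/-- The map `∂` on a basis cell: `∂[{i}|{j}] = x_i x_j`, and for `|σ|+|τ| ≥ 3`,
`∂[σ|τ] = x_{max τ}[σ|τ∖max τ] − (−1)^{|τ|+|σ|} x_{min σ}[σ∖min σ|τ]`. -/
def partialCell (e : Cell n) : Ftot n k :=
  if IsBasisCell G e then
    if e.1.card + e.2.card = 2 then
      (∏ i ∈ e.1 ∪ e.2, (X i : MvPolynomial (Fin n) k)) • sym G k ((∅, ∅) : Cell n)
    else if 3 ≤ e.1.card + e.2.card then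
      if h1 : e.1.Nonempty then
        if h2 : e.2.Nonempty then
          (X (e.2.max' h2) : MvPolynomial (Fin n) k) • sym G k (e.1, e.2.erase (e.2.max' h2))
          - ((-1 : MvPolynomial (Fin n) k) ^ (e.2.card + e.1.card)) •
              ((X (e.1.min' h1) : MvPolynomial (Fin n) k) •
                sym G k (e.1.erase (e.1.min' h1), e.2))
        else 0
      else 0
    else 0
  else 0

/-- The map `∂`, as an `S`-linear endomorphism of the total module. -/
def Pmap : Ftot n k →ₗ[MvPolynomial (Fin n) k] Ftot n k :=
  Finsupp.lsum ℕ fun e => LinearMap.smulRight LinearMap.id (partialCell G k e)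

/-- The `k`-linear projection `π` of `S` fixing each monomial not in `I_G` and
annihilating each monomial in `I_G`. -/
def piMap : MvPolynomial (Fin n) k →ₗ[k] MvPolynomial (Fin n) k :=
  (MvPolynomial.basisMonomials (Fin n) k).constr ℕ fun α =>
    if monomial α (1 : k) ∈ edgeIdeal G k then 0 else monomial α (1 : k)

/-- The `ℕⁿ`-multidegree of the basis vector `x^α [σ|τ]`: `α + Σ_{i ∈ σ∪τ} eᵢ`. -/
def mdeg (e : Cell n) (α : Fin n →₀ ℕ) : Fin n →₀ ℕ :=
  α + ∑ i ∈ e.1 ∪ e.2, Finsupp.single i 1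

/-- The `μ`-homogeneous component of the resolution (as a `k`-subspace). -/
def Hsub (μ : Fin n →₀ ℕ) : Submodule k (Ftot n k) :=
  Submodule.span k {f : Ftot n k |
    ∃ (e : Cell n) (α : Fin n →₀ ℕ), IsBasisCell G e ∧ mdeg e α = μ ∧
      f = Finsupp.single e (monomial α (1 : k))}

/-!
The differential is a Koszul-type operator `koszulDiff` removing one vertex from `σ` or from `τ`
with a sign, evaluated on the symbols `[σ'|τ']`. Formally this operator squares to zero, since
removing two vertices in either order produces the same symbol with opposite signs. For a basis
cell with `|σ| + |τ| ≥ 4` every face that occurs is again a basis cell, or has an empty side and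
then contributes zero on both sides. Here the cointerval structure enters: erasing from `τ` can
only raise `min τ`, and in a cointerval graph ordered by left endpoints the neighbours of `i`
above `i` form an up-set. For `|σ| + |τ| = 3` the faces are cells `[{i}|{j}]`, whose differential
is the monomial `x_i x_j`, and the two terms cancel by direct inspection of signs.
-/

theorem sum_neg_one_pow_card_filter_lt_of_card_eq_two {ι R : Type*} [LinearOrder ι] [CommRing R]
    {s : Finset ι} (hs : s.card = 2) :
    ∑ i ∈ s, (-1 : R) ^ (s.filter fun j => i < j).card = 0 := by
  obtain ⟨a, b, hab, rfl⟩ := Finset.card_eq_two.mp hs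
  rw [Finset.sum_pair hab]
  rcases hab.lt_or_gt with h | h <;>
    simp [Finset.filter_insert, Finset.filter_singleton, h, h.not_gt]

section Koszul

variable {ι R M N : Type*} [LinearOrder ι] [CommRing R] [AddCommGroup M] [Module R M]
  [AddCommGroup N] [Module R N] (x : ι → R)

/-- The formula defining `d[σ|τ]` for `|σ| + |τ| ≥ 3`, with each symbol `[σ'|τ']`
replaced by `v (σ', τ')`. -/
def koszulDiff (v : Finset ι × Finset ι → M) (e : Finset ι × Finset ι) : M :=
  (∑ i ∈ e.1, ((-1 : R) ^ (e.2.card + (e.1.filter fun j => i < j).card) * x i) •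
      v (e.1.erase i, e.2))
  + ∑ j ∈ e.2, ((-1 : R) ^ (e.2.filter fun j' => j < j').card * x j) • v (e.1, e.2.erase j)

theorem map_koszulDiff (f : M →ₗ[R] N) (v : Finset ι × Finset ι → M)
    (e : Finset ι × Finset ι) :
    f (koszulDiff x v e) = koszulDiff x (f ∘ v) e := by
  simp only [koszulDiff, map_add, map_sum, map_smul, Function.comp_apply]

theorem koszulDiff_congr {v w : Finset ι × Finset ι → M} {σ τ : Finset ι}
    (hσ : ∀ i ∈ σ, v (σ.erase i, τ) = w (σ.erase i, τ))
    (hτ : ∀ j ∈ τ, v (σ, τ.erase j) = w (σ, τ.erase j)) :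
    koszulDiff x v (σ, τ) = koszulDiff x w (σ, τ) := by
  unfold koszulDiff
  congr 1
  · exact Finset.sum_congr rfl fun i hi => by rw [hσ i hi]
  · exact Finset.sum_congr rfl fun j hj => by rw [hτ j hj]

/-- Removing `i` and then `i'` from `s` carries the opposite sign to removing `i'` and then `i`. -/
theorem koszul_sign_swap (m : ℕ) {s : Finset ι} {i i' : ι} (hi' : i' ∈ s) (h : i < i') :
    (-1 : R) ^ (m + (s.filter fun j => i < j).card) * x i *
        ((-1 : R) ^ (m + ((s.erase i).filter fun j => i' < j).card) * x i')
      + (-1 : R) ^ (m + (s.filter fun j => i' < j).card) * x i' *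
        ((-1 : R) ^ (m + ((s.erase i').filter fun j => i < j).card) * x i) = 0 := by
  have hB : (s.erase i).filter (fun j => i' < j) = s.filter fun j => i' < j := by
    rw [Finset.filter_erase, Finset.erase_eq_of_notMem]
    simpa using fun _ => h.le
  have hA : ((s.erase i').filter fun j => i < j).card + 1 = (s.filter fun j => i < j).card := by
    rw [Finset.filter_erase, Finset.card_erase_add_one (Finset.mem_filter.mpr ⟨hi', h⟩)]
  rw [hB, ← hA]
  ring

theorem sum_sum_erase_koszul_eq_zero (m : ℕ) (s : Finset ι) (w : ι → ι → M)
    (hw : ∀ i i', w i i' = w i' i) :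
    ∑ i ∈ s, ∑ i' ∈ s.erase i,
      ((-1 : R) ^ (m + (s.filter fun j => i < j).card) * x i *
        ((-1 : R) ^ (m + ((s.erase i).filter fun j => i' < j).card) * x i')) • w i i' = 0 := by
  rw [Finset.sum_sigma']
  refine Finset.sum_involution (fun p _ => ⟨p.2, p.1⟩) ?_ ?_ ?_ fun _ _ => rfl
  · rintro ⟨i, i'⟩ hp
    obtain ⟨hi, hi'⟩ := Finset.mem_sigma.mp hp
    obtain ⟨hne, hi'⟩ := Finset.mem_erase.mp hi'
    rw [hw i' i, ← add_smul]
    rcases hne.lt_or_gt with h | h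
    · rw [add_comm, koszul_sign_swap x m hi h, zero_smul]
    · rw [koszul_sign_swap x m hi' h, zero_smul]
  · rintro ⟨i, i'⟩ hp _ h
    exact Finset.ne_of_mem_erase (Finset.mem_sigma.mp hp).2 (congrArg Sigma.fst h)
  · rintro ⟨i, i'⟩ hp
    obtain ⟨hi, hi'⟩ := Finset.mem_sigma.mp hp
    exact Finset.mem_sigma.mpr ⟨Finset.mem_of_mem_erase hi',
      Finset.mem_erase.mpr ⟨(Finset.ne_of_mem_erase hi').symm, hi⟩⟩

theorem koszulDiff_koszulDiff (v : Finset ι × Finset ι → M) (e : Finset ι × Finset ι) :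
    koszulDiff x (koszulDiff x v) e = 0 := by
  obtain ⟨σ, τ⟩ := e
  simp only [koszulDiff, smul_add, Finset.smul_sum, smul_smul, Finset.sum_add_distrib]
  have hσσ := sum_sum_erase_koszul_eq_zero x τ.card σ
    (fun i i' => v ((σ.erase i).erase i', τ)) fun _ _ => by rw [Finset.erase_right_comm]
  have hττ := sum_sum_erase_koszul_eq_zero x 0 τ (fun j j' => v (σ, (τ.erase j).erase j'))
    fun _ _ => by rw [Finset.erase_right_comm]
  simp only [zero_add] at hσσ hττ
  rw [hσσ, hττ, zero_add, add_zero, Finset.sum_comm (s := τ), ← Finset.sum_add_distrib]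
  refine Finset.sum_eq_zero fun i _ => ?_
  rw [← Finset.sum_add_distrib]
  refine Finset.sum_eq_zero fun j hj => ?_
  rw [← add_smul, ← Finset.card_erase_add_one hj]
  convert zero_smul R _
  ring

end Koszul

def AdjUpwardClosed (G : SimpleGraph (Fin n)) : Prop :=
  ∀ ⦃i t t' : Fin n⦄, i < t → t ≤ t' → G.Adj i t → G.Adj i t'

theorem cigraph_adjUpwardClosed (a b : Fin n → ℝ) (hab : ∀ i, a i ≤ b i)
    (hmono : ∀ i j : Fin n, i < j → a i ≤ a j) : AdjUpwardClosed (cigraph n a b) := by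
  rintro i t t' hit htt' ⟨-, hdisj⟩
  have hbi : b i < a t := by
    by_contra! h
    exact Set.disjoint_left.mp hdisj ⟨hmono i t hit, h⟩ ⟨le_rfl, hab t⟩
  have hat : a t ≤ a t' := htt'.eq_or_lt.elim (fun h => h ▸ le_rfl) (hmono t t')
  refine ⟨(hit.trans_le htt').ne, Set.disjoint_left.mpr fun y hy hy' => ?_⟩
  exact (hy.2.trans_lt (hbi.trans_le (hat.trans hy'.1))).false

section Cells

variable {G}

theorem not_isBasisCell_empty_left {τ : Finset (Fin n)} (hτ : τ.Nonempty) :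
    ¬ IsBasisCell G (∅, τ) := by
  rintro (h | h)
  · exact hτ.ne_empty (Prod.mk.inj h).2
  · exact Finset.not_nonempty_empty h.1

theorem not_isBasisCell_empty_right {σ : Finset (Fin n)} (hσ : σ.Nonempty) :
    ¬ IsBasisCell G (σ, ∅) := by
  rintro (h | h)
  · exact hσ.ne_empty (Prod.mk.inj h).1
  · exact Finset.not_nonempty_empty h.2.1

theorem IsBasisCell.disjoint {σ τ : Finset (Fin n)} (hb : IsBasisCell G (σ, τ)) :
    Disjoint σ τ := by
  rcases hb with h | h
  · simp [(Prod.mk.inj h).1]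
  · exact h.2.2.1

theorem IsBasisCell.erase_left {σ τ : Finset (Fin n)} (hb : IsBasisCell G (σ, τ)) {i : Fin n}
    (hne : (σ.erase i).Nonempty) : IsBasisCell G (σ.erase i, τ) := by
  rcases hb with h | ⟨-, hτ, hd, hlt, hadj⟩
  · simp [(Prod.mk.inj h).1] at hne
  · exact Or.inr ⟨hne, hτ, hd.mono_left (Finset.erase_subset _ _),
      fun s hs => hlt s (Finset.mem_of_mem_erase hs),
      fun s hs => hadj s (Finset.mem_of_mem_erase hs)⟩

/-- Erasing from `τ` may raise `min τ`; upward closure keeps every `i ∈ σ` adjacent to it. -/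
theorem IsBasisCell.erase_right (hG : AdjUpwardClosed G) {σ τ : Finset (Fin n)}
    (hb : IsBasisCell G (σ, τ)) {j : Fin n} (hne : (τ.erase j).Nonempty) :
    IsBasisCell G (σ, τ.erase j) := by
  rcases hb with h | ⟨hσ, hτ, hd, hlt, hadj⟩
  · simp [(Prod.mk.inj h).2] at hne
  refine Or.inr ⟨hσ, hne, hd.mono_right (Finset.erase_subset _ _),
    fun s hs t ht => hlt s hs t (Finset.mem_of_mem_erase ht), fun s hs t ht _ => ?_⟩
  have hmin := τ.min'_mem hτ
  exact hG (hlt s hs _ hmin) (τ.min'_le t (Finset.mem_of_mem_erase ht))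
    (hadj s hs _ hmin fun t' ht' => τ.min'_le t' ht')

variable (G)

theorem sym_of_not_isBasisCell {e : Cell n} (h : ¬ IsBasisCell G e) : sym G k e = 0 := if_neg h

theorem diffCell_of_not_isBasisCell {e : Cell n} (h : ¬ IsBasisCell G e) : diffCell G k e = 0 :=
  if_neg h

theorem diffCell_empty : diffCell G k (∅, ∅) = 0 := by
  simp [diffCell]

theorem diffCell_of_card_add_card_eq_two {e : Cell n} (hb : IsBasisCell G e)
    (h2 : e.1.card + e.2.card = 2) :
    diffCell G k e = (∏ i ∈ e.1 ∪ e.2, X (R := k) i) • sym G k (∅, ∅) := by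
  rw [diffCell, if_pos hb, if_pos h2]

theorem diffCell_eq_koszulDiff {e : Cell n} (hb : IsBasisCell G e)
    (h3 : 3 ≤ e.1.card + e.2.card) :
    diffCell G k e = koszulDiff (X (R := k)) (sym G k) e := by
  rw [diffCell, if_pos hb, if_neg (by omega), if_pos h3]
  rfl

theorem koszulDiff_sym_empty_left {τ : Finset (Fin n)} (hτ : 2 ≤ τ.card) :
    koszulDiff (X (R := k)) (sym G k) (∅, τ) = 0 := by
  refine (zero_add _).trans (Finset.sum_eq_zero fun j (hj : j ∈ τ) => ?_)
  have hne : (τ.erase j).Nonempty := by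
    rw [← Finset.card_pos, Finset.card_erase_of_mem hj]
    omega
  rw [sym_of_not_isBasisCell G k (not_isBasisCell_empty_left hne), smul_zero]

theorem koszulDiff_sym_empty_right {σ : Finset (Fin n)} (hσ : 2 ≤ σ.card) :
    koszulDiff (X (R := k)) (sym G k) (σ, ∅) = 0 := by
  refine (add_zero _).trans (Finset.sum_eq_zero fun i (hi : i ∈ σ) => ?_)
  have hne : (σ.erase i).Nonempty := by
    rw [← Finset.card_pos, Finset.card_erase_of_mem hi]
    omega
  rw [sym_of_not_isBasisCell G k (not_isBasisCell_empty_right hne), smul_zero]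

theorem Dmap_single (e : Cell n) (p : MvPolynomial (Fin n) k) :
    Dmap G k (Finsupp.single e p) = p • diffCell G k e := by
  simp [Dmap]

theorem Dmap_sym (e : Cell n) : Dmap G k (sym G k e) = diffCell G k e := by
  by_cases h : IsBasisCell G e
  · rw [sym, if_pos h, Dmap_single, one_smul]
  · rw [sym_of_not_isBasisCell G k h, map_zero, diffCell_of_not_isBasisCell G k h]

theorem Dmap_diffCell_eq_koszulDiff {e : Cell n} (hb : IsBasisCell G e)
    (h3 : 3 ≤ e.1.card + e.2.card) :
    Dmap G k (diffCell G k e) = koszulDiff (X (R := k)) (diffCell G k) e := by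
  rw [diffCell_eq_koszulDiff G k hb h3, map_koszulDiff]
  exact congrArg (koszulDiff (X (R := k)) · e) (funext (Dmap_sym G k))

end Cells

section Square

variable {G}

theorem Dmap_diffCell_singleton_left (hG : AdjUpwardClosed G) {s : Fin n} {τ : Finset (Fin n)}
    (hb : IsBasisCell G ({s}, τ)) (hτ : τ.card = 2) : Dmap G k (diffCell G k ({s}, τ)) = 0 := by
  rw [Dmap_diffCell_eq_koszulDiff G k hb (by rw [Finset.card_singleton, hτ])]
  have hs : s ∉ τ := Finset.disjoint_singleton_left.mp hb.disjoint
  have hface (c : MvPolynomial (Fin n) k) {j : Fin n} (hj : j ∈ τ) :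
      (c * X j) • diffCell G k ({s}, τ.erase j) =
        c • (∏ l ∈ {s} ∪ τ, X (R := k) l) • sym G k (∅, ∅) := by
    have hcard := Finset.card_erase_of_mem hj
    have hne : (τ.erase j).Nonempty := by
      rw [← Finset.card_pos]
      omega
    have hjs : j ∉ ({s} : Finset (Fin n)) := fun h => hs (Finset.mem_singleton.mp h ▸ hj)
    rw [diffCell_of_card_add_card_eq_two G k (hb.erase_right hG hne)
        (by rw [Finset.card_singleton, hcard]; omega),
      ← Finset.mul_prod_erase _ _ (Finset.mem_union_right _ hj), Finset.erase_union_distrib,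
      Finset.erase_eq_of_notMem hjs, smul_smul, smul_smul, mul_assoc]
  simp only [koszulDiff, Finset.sum_singleton, Finset.erase_singleton]
  rw [diffCell_of_not_isBasisCell G k (not_isBasisCell_empty_left (Finset.card_pos.mp (by omega))),
    smul_zero, zero_add, Finset.sum_congr rfl fun j hj => hface _ hj, ← Finset.sum_smul,
    sum_neg_one_pow_card_filter_lt_of_card_eq_two hτ, zero_smul]

theorem Dmap_diffCell_singleton_right {σ : Finset (Fin n)} {t : Fin n}
    (hb : IsBasisCell G (σ, {t})) (hσ : σ.card = 2) : Dmap G k (diffCell G k (σ, {t})) = 0 := by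
  rw [Dmap_diffCell_eq_koszulDiff G k hb (by rw [Finset.card_singleton, hσ])]
  have ht : t ∉ σ := Finset.disjoint_singleton_right.mp hb.disjoint
  have hface (c : MvPolynomial (Fin n) k) {i : Fin n} (hi : i ∈ σ) :
      (c * X i) • diffCell G k (σ.erase i, {t}) =
        c • (∏ l ∈ σ ∪ {t}, X (R := k) l) • sym G k (∅, ∅) := by
    have hcard := Finset.card_erase_of_mem hi
    have hne : (σ.erase i).Nonempty := by
      rw [← Finset.card_pos]
      omega
    have hit : i ∉ ({t} : Finset (Fin n)) := fun h => ht (Finset.mem_singleton.mp h ▸ hi)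
    rw [diffCell_of_card_add_card_eq_two G k (hb.erase_left hne)
        (by rw [Finset.card_singleton, hcard]; omega),
      ← Finset.mul_prod_erase _ _ (Finset.mem_union_left _ hi), Finset.erase_union_distrib,
      Finset.erase_eq_of_notMem hit, smul_smul, smul_smul, mul_assoc]
  simp only [koszulDiff, Finset.sum_singleton, Finset.erase_singleton]
  rw [diffCell_of_not_isBasisCell G k (not_isBasisCell_empty_right (Finset.card_pos.mp (by omega))),
    smul_zero, add_zero, Finset.sum_congr rfl fun i hi => hface _ hi, ← Finset.sum_smul]
  simp only [pow_add, ← Finset.mul_sum]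
  rw [sum_neg_one_pow_card_filter_lt_of_card_eq_two hσ, mul_zero, zero_smul]

theorem Dmap_diffCell_of_four_le (hG : AdjUpwardClosed G) {σ τ : Finset (Fin n)}
    (hb : IsBasisCell G (σ, τ)) (hσ : σ.Nonempty) (hτ : τ.Nonempty)
    (h4 : 4 ≤ σ.card + τ.card) :
    Dmap G k (diffCell G k (σ, τ)) = 0 := by
  have hleft : ∀ i ∈ σ, diffCell G k (σ.erase i, τ) =
      koszulDiff (X (R := k)) (sym G k) (σ.erase i, τ) := by
    intro i hi
    have hcard := Finset.card_erase_of_mem hi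
    rcases (σ.erase i).eq_empty_or_nonempty with he | hne
    · rw [he, Finset.card_empty] at hcard
      rw [he, diffCell_of_not_isBasisCell G k (not_isBasisCell_empty_left hτ),
        koszulDiff_sym_empty_left G k (by omega)]
    · exact diffCell_eq_koszulDiff G k (hb.erase_left hne) (by dsimp only; omega)
  have hright : ∀ j ∈ τ, diffCell G k (σ, τ.erase j) =
      koszulDiff (X (R := k)) (sym G k) (σ, τ.erase j) := by
    intro j hj
    have hcard := Finset.card_erase_of_mem hj
    rcases (τ.erase j).eq_empty_or_nonempty with he | hne
    · rw [he, Finset.card_empty] at hcard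
      rw [he, diffCell_of_not_isBasisCell G k (not_isBasisCell_empty_right hσ),
        koszulDiff_sym_empty_right G k (by omega)]
    · exact diffCell_eq_koszulDiff G k (hb.erase_right hG hne) (by dsimp only; omega)
  rw [Dmap_diffCell_eq_koszulDiff G k hb (show 3 ≤ σ.card + τ.card by omega),
    koszulDiff_congr _ hleft hright]
  exact koszulDiff_koszulDiff _ _ _

theorem Dmap_diffCell (hG : AdjUpwardClosed G) (e : Cell n) : Dmap G k (diffCell G k e) = 0 := by
  by_cases hb : IsBasisCell G e
  swap
  · rw [diffCell_of_not_isBasisCell G k hb, map_zero]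
  obtain ⟨σ, τ⟩ := e
  rcases id hb with h | ⟨hσ, hτ, -⟩
  · rw [h, diffCell_empty, map_zero]
  dsimp only at hσ hτ
  have := hσ.card_pos
  have := hτ.card_pos
  rcases (by omega : σ.card + τ.card = 2 ∨ σ.card + τ.card = 3 ∨ 4 ≤ σ.card + τ.card)
    with h2 | h3 | h4
  · rw [diffCell_of_card_add_card_eq_two G k hb h2, map_smul, Dmap_sym, diffCell_empty, smul_zero]
  · rcases (by omega : σ.card = 1 ∨ τ.card = 1) with hσ1 | hτ1
    · obtain ⟨s, rfl⟩ := Finset.card_eq_one.mp hσ1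
      exact Dmap_diffCell_singleton_left k hG hb (by omega)
    · obtain ⟨t, rfl⟩ := Finset.card_eq_one.mp hτ1
      exact Dmap_diffCell_singleton_right k hb (by omega)
  · exact Dmap_diffCell_of_four_le k hG hb hσ hτ h4

theorem Dmap_comp_Dmap (hG : AdjUpwardClosed G) : Dmap G k ∘ₗ Dmap G k = 0 :=
  Finsupp.lhom_ext fun e p => by
    rw [LinearMap.comp_apply, Dmap_single, map_smul, Dmap_diffCell k hG, smul_zero,
      LinearMap.zero_apply]

end Square

theorem stmt1_general (n : ℕ) (a b : Fin n → ℝ)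
    (hab : ∀ i, a i ≤ b i) (hmono : ∀ i j : Fin n, i < j → a i ≤ a j)
    (k : Type) [Field k]
    (f : Ftot n k) :
    Dmap (cigraph n a b) k (Dmap (cigraph n a b) k f) = 0 :=
  LinearMap.congr_fun (Dmap_comp_Dmap k (cigraph_adjUpwardClosed a b hab hmono)) f

theorem stmt1 (n : ℕ) (hn : 1 ≤ n) (a b : Fin n → ℝ)
    (hab : ∀ i, a i ≤ b i) (hmono : ∀ i j : Fin n, i < j → a i ≤ a j)
    (k : Type) [Field k]
    (d : ℕ) (hd : 2 ≤ d) (f : Ftot n k) (hf : f ∈ Fsub (cigraph n a b) k d) :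
    Dmap (cigraph n a b) k (Dmap (cigraph n a b) k f) = 0 :=
  stmt1_general n a b hab hmono k f

end EdgeRes
end
end

section
/- Every S-linear map φ₀ : X₀ → Y₀ with φ₀(im d₁ᵡ) ⊆ im d₁ʸ has a unique lifting to a chain map φ : X → Y satisfying φ_n(1 ⊗ v) ∈ im c_{n-1} for all v ∈ V_n and all n ≥ 1; moreover this lifting is given inductively by φ_{n+1}(1 ⊗ v) = c_n(φ_n(d_{n+1}(1 ⊗ v))) for v ∈ V_{n+1}. -/
/-!
Since `c (m + 1) ∘ c m = 0`, the homotopy identity shows that `c m ∘ d m` fixes every element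
of `im (c m)`. Hence a chain map with `φ (m + 1) (1 ⊗ v) ∈ im (c m)` satisfies
`φ (m + 1) (1 ⊗ v) = c m (φ m (d (1 ⊗ v)))`, and as `S ⊗ V (m + 1)` is generated over `S` by the
`1 ⊗ v`, this recursion determines `φ`. Conversely, the maps defined by the recursion form a
chain map: `d ∘ c` fixes every cycle (in degree `0`, every boundary, which is where the
hypothesis on `φ₀` enters), and `φ m (d (1 ⊗ v))` is a cycle by induction.
-/

open TensorProduct

section ContractingHomotopy

variable {R : Type*} [Ring R] {Y : ℕ → Type*} [∀ m, AddCommGroup (Y m)] [∀ m, Module R (Y m)]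
  (d : ∀ m, Y (m + 1) →ₗ[R] Y m) (c : ∀ m, Y m →ₗ[R] Y (m + 1))

theorem c_d_eq_self_of_mem_range (hcc : ∀ m, (c (m + 1)).comp (c m) = 0)
    (hhom : ∀ m (y : Y (m + 1)), d (m + 1) (c (m + 1) y) + c m (d m y) = y)
    {m : ℕ} {y : Y (m + 1)} (hy : y ∈ Set.range (c m)) : c m (d m y) = y := by
  obtain ⟨x, rfl⟩ := hy
  have hcc_x : c (m + 1) (c m x) = 0 := LinearMap.congr_fun (hcc m) x
  simpa [hcc_x] using hhom m (c m x)

theorem d_c_eq_self_of_d_eq_zero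
    (hhom : ∀ m (y : Y (m + 1)), d (m + 1) (c (m + 1) y) + c m (d m y) = y)
    {m : ℕ} {y : Y (m + 1)} (hy : d m y = 0) : d (m + 1) (c (m + 1) y) = y := by
  simpa [hy] using hhom m y

end ContractingHomotopy

section Lifting

variable {k S : Type*} [CommRing k] [CommRing S] [Algebra k S] {V W : ℕ → Type*}
  [∀ m, AddCommGroup (V m)] [∀ m, Module k (V m)] [∀ m, AddCommGroup (W m)] [∀ m, Module k (W m)]
  (dX : ∀ m, S ⊗[k] V (m + 1) →ₗ[S] S ⊗[k] V m) (dY : ∀ m, S ⊗[k] W (m + 1) →ₗ[S] S ⊗[k] W m)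
  (c : ∀ m, S ⊗[k] W m →ₗ[k] S ⊗[k] W (m + 1)) (φ₀ : S ⊗[k] V 0 →ₗ[S] S ⊗[k] W 0)

def IsNormalizedLift (φ : ∀ m, S ⊗[k] V m →ₗ[S] S ⊗[k] W m) : Prop :=
  φ 0 = φ₀ ∧ (∀ m, (dY m).comp (φ (m + 1)) = (φ m).comp (dX m)) ∧
    ∀ (m : ℕ) (v : V (m + 1)), φ (m + 1) ((1 : S) ⊗ₜ[k] v) ∈ Set.range (c m)

noncomputable def canonicalLift : ∀ m, S ⊗[k] V m →ₗ[S] S ⊗[k] W m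
  | 0 => φ₀
  | n + 1 => LinearMap.liftBaseChange S
      (c n ∘ₗ (canonicalLift n ∘ₗ dX n).restrictScalars k ∘ₗ TensorProduct.mk k S (V (n + 1)) 1)

variable {dX dY c φ₀}

theorem canonicalLift_zero : canonicalLift dX c φ₀ 0 = φ₀ := rfl

theorem canonicalLift_succ_one_tmul (n : ℕ) (v : V (n + 1)) :
    canonicalLift dX c φ₀ (n + 1) ((1 : S) ⊗ₜ v) =
      c n (canonicalLift dX c φ₀ n (dX n ((1 : S) ⊗ₜ v))) := by
  simp [canonicalLift]

theorem dY_comp_canonicalLift (hX : ∀ m, (dX m).comp (dX (m + 1)) = 0)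
    (hhom : ∀ m (y : S ⊗[k] W (m + 1)), dY (m + 1) (c (m + 1) y) + c m (dY m y) = y)
    (hc0 : ∀ y : S ⊗[k] W 1, dY 0 (c 0 (dY 0 y)) = dY 0 y)
    (hφ₀ : ∀ x : S ⊗[k] V 1, ∃ y : S ⊗[k] W 1, dY 0 y = φ₀ (dX 0 x)) (m : ℕ) :
    (dY m).comp (canonicalLift dX c φ₀ (m + 1)) = (canonicalLift dX c φ₀ m).comp (dX m) := by
  induction m with
  | zero =>
    ext v
    obtain ⟨y, hy⟩ := hφ₀ ((1 : S) ⊗ₜ v)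
    simp only [AlgebraTensorModule.curry_apply, curry_apply, LinearMap.coe_restrictScalars,
      LinearMap.comp_apply, canonicalLift_succ_one_tmul, canonicalLift_zero, ← hy, hc0]
  | succ n ih =>
    ext v
    simp only [AlgebraTensorModule.curry_apply, curry_apply, LinearMap.coe_restrictScalars,
      LinearMap.comp_apply, canonicalLift_succ_one_tmul]
    refine d_c_eq_self_of_d_eq_zero (fun m ↦ (dY m).restrictScalars k) c hhom ?_
    calc dY n (canonicalLift dX c φ₀ (n + 1) (dX (n + 1) ((1 : S) ⊗ₜ v)))
        = canonicalLift dX c φ₀ n ((dX n).comp (dX (n + 1)) ((1 : S) ⊗ₜ v)) :=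
          LinearMap.congr_fun ih _
      _ = 0 := by rw [hX, LinearMap.zero_apply, map_zero]

theorem IsNormalizedLift.apply_succ_one_tmul (hcc : ∀ m, (c (m + 1)).comp (c m) = 0)
    (hhom : ∀ m (y : S ⊗[k] W (m + 1)), dY (m + 1) (c (m + 1) y) + c m (dY m y) = y)
    {φ : ∀ m, S ⊗[k] V m →ₗ[S] S ⊗[k] W m} (hφ : IsNormalizedLift dX dY c φ₀ φ)
    (m : ℕ) (v : V (m + 1)) :
    φ (m + 1) ((1 : S) ⊗ₜ v) = c m (φ m (dX m ((1 : S) ⊗ₜ v))) := by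
  rw [← LinearMap.comp_apply (φ m), ← hφ.2.1 m, LinearMap.comp_apply]
  exact (c_d_eq_self_of_mem_range (fun m ↦ (dY m).restrictScalars k) c hcc hhom
    (hφ.2.2 m v)).symm

theorem IsNormalizedLift.eq_canonicalLift (hcc : ∀ m, (c (m + 1)).comp (c m) = 0)
    (hhom : ∀ m (y : S ⊗[k] W (m + 1)), dY (m + 1) (c (m + 1) y) + c m (dY m y) = y)
    {φ : ∀ m, S ⊗[k] V m →ₗ[S] S ⊗[k] W m} (hφ : IsNormalizedLift dX dY c φ₀ φ) :
    φ = canonicalLift dX c φ₀ := by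
  funext m
  induction m with
  | zero => exact hφ.1
  | succ n ih =>
    ext v
    simpa [ih, canonicalLift_succ_one_tmul] using hφ.apply_succ_one_tmul hcc hhom n v

theorem isNormalizedLift_canonicalLift (hX : ∀ m, (dX m).comp (dX (m + 1)) = 0)
    (hhom : ∀ m (y : S ⊗[k] W (m + 1)), dY (m + 1) (c (m + 1) y) + c m (dY m y) = y)
    (hc0 : ∀ y : S ⊗[k] W 1, dY 0 (c 0 (dY 0 y)) = dY 0 y)
    (hφ₀ : ∀ x : S ⊗[k] V 1, ∃ y : S ⊗[k] W 1, dY 0 y = φ₀ (dX 0 x)) :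
    IsNormalizedLift dX dY c φ₀ (canonicalLift dX c φ₀) :=
  ⟨rfl, dY_comp_canonicalLift hX hhom hc0 hφ₀,
    fun m v ↦ ⟨_, (canonicalLift_succ_one_tmul m v).symm⟩⟩

end Lifting

theorem stmt6_general (k : Type*) [CommRing k] (S : Type*) [CommRing S] [Algebra k S]
    (V W : ℕ → Type*)
    [∀ m, AddCommGroup (V m)] [∀ m, Module k (V m)]
    [∀ m, AddCommGroup (W m)] [∀ m, Module k (W m)]
    (dX : ∀ m : ℕ, (S ⊗[k] V (m + 1)) →ₗ[S] S ⊗[k] V m)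
    (dY : ∀ m : ℕ, (S ⊗[k] W (m + 1)) →ₗ[S] S ⊗[k] W m)
    (hX : ∀ m, (dX m).comp (dX (m + 1)) = 0)
    (c : ∀ m : ℕ, (S ⊗[k] W m) →ₗ[k] S ⊗[k] W (m + 1))
    (hcc : ∀ m, (c (m + 1)).comp (c m) = 0)
    (hhom : ∀ m : ℕ, ∀ y : S ⊗[k] W (m + 1), dY (m + 1) (c (m + 1) y) + c m (dY m y) = y)
    (hc0 : ∀ y : S ⊗[k] W 1, dY 0 (c 0 (dY 0 y)) = dY 0 y)
    (φ₀ : (S ⊗[k] V 0) →ₗ[S] S ⊗[k] W 0)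
    (hφ₀ : ∀ x : S ⊗[k] V 1, ∃ y : S ⊗[k] W 1, dY 0 y = φ₀ (dX 0 x)) :
    (∃! φ : ∀ m, (S ⊗[k] V m) →ₗ[S] S ⊗[k] W m,
      φ 0 = φ₀ ∧ (∀ m, (dY m).comp (φ (m + 1)) = (φ m).comp (dX m)) ∧
        ∀ (m : ℕ) (v : V (m + 1)), φ (m + 1) ((1 : S) ⊗ₜ[k] v) ∈ Set.range (c m))
    ∧ ∀ φ : ∀ m, (S ⊗[k] V m) →ₗ[S] S ⊗[k] W m,
        (φ 0 = φ₀ ∧ (∀ m, (dY m).comp (φ (m + 1)) = (φ m).comp (dX m)) ∧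
          ∀ (m : ℕ) (v : V (m + 1)), φ (m + 1) ((1 : S) ⊗ₜ[k] v) ∈ Set.range (c m)) →
        ∀ (m : ℕ) (v : V (m + 1)),
          φ (m + 1) ((1 : S) ⊗ₜ[k] v) = c m (φ m (dX m ((1 : S) ⊗ₜ[k] v))) :=
  ⟨⟨canonicalLift dX c φ₀, isNormalizedLift_canonicalLift hX hhom hc0 hφ₀,
      fun _ hφ ↦ IsNormalizedLift.eq_canonicalLift (dY := dY) hcc hhom hφ⟩,
    fun _ hφ ↦ IsNormalizedLift.apply_succ_one_tmul (dY := dY) hcc hhom hφ⟩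

/-- MacLane-style lifting lemma: if `Y` has a contracting homotopy `c` with `c² = 0`,
then any `φ₀ : X₀ → Y₀` compatible with the images of the degree-1 differentials lifts
uniquely to a chain map `φ : X → Y` with `φₙ(1 ⊗ v) ∈ im c` for `n ≥ 1`; the lifting
is given inductively by `φ_{n+1}(1 ⊗ v) = c(φ_n(d(1 ⊗ v)))`. -/
theorem stmt6 (k : Type*) [CommRing k] (S : Type*) [CommRing S] [Algebra k S]
    (V W : ℕ → Type*)
    [∀ m, AddCommGroup (V m)] [∀ m, Module k (V m)]
    [∀ m, AddCommGroup (W m)] [∀ m, Module k (W m)]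
    (dX : ∀ m : ℕ, (S ⊗[k] V (m + 1)) →ₗ[S] S ⊗[k] V m)
    (dY : ∀ m : ℕ, (S ⊗[k] W (m + 1)) →ₗ[S] S ⊗[k] W m)
    (hX : ∀ m, (dX m).comp (dX (m + 1)) = 0)
    (hY : ∀ m, (dY m).comp (dY (m + 1)) = 0)
    (c : ∀ m : ℕ, (S ⊗[k] W m) →ₗ[k] S ⊗[k] W (m + 1))
    (hcc : ∀ m, (c (m + 1)).comp (c m) = 0)
    (hhom : ∀ m : ℕ, ∀ y : S ⊗[k] W (m + 1), dY (m + 1) (c (m + 1) y) + c m (dY m y) = y)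
    (hc0 : ∀ y : S ⊗[k] W 1, dY 0 (c 0 (dY 0 y)) = dY 0 y)
    (φ₀ : (S ⊗[k] V 0) →ₗ[S] S ⊗[k] W 0)
    (hφ₀ : ∀ x : S ⊗[k] V 1, ∃ y : S ⊗[k] W 1, dY 0 y = φ₀ (dX 0 x)) :
    (∃! φ : ∀ m, (S ⊗[k] V m) →ₗ[S] S ⊗[k] W m,
      φ 0 = φ₀ ∧ (∀ m, (dY m).comp (φ (m + 1)) = (φ m).comp (dX m)) ∧
        ∀ (m : ℕ) (v : V (m + 1)), φ (m + 1) ((1 : S) ⊗ₜ[k] v) ∈ Set.range (c m))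
    ∧ ∀ φ : ∀ m, (S ⊗[k] V m) →ₗ[S] S ⊗[k] W m,
        (φ 0 = φ₀ ∧ (∀ m, (dY m).comp (φ (m + 1)) = (φ m).comp (dX m)) ∧
          ∀ (m : ℕ) (v : V (m + 1)), φ (m + 1) ((1 : S) ⊗ₜ[k] v) ∈ Set.range (c m)) →
        ∀ (m : ℕ) (v : V (m + 1)),
          φ (m + 1) ((1 : S) ⊗ₜ[k] v) = c m (φ m (dX m ((1 : S) ⊗ₜ[k] v))) :=
  stmt6_general k S V W dX dY hX c hcc hhom hc0 φ₀ hφ₀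
end
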